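/- Let X X^T be invertible, Q = Y X^T (X X^T)^{-1/2} with reduced SVD Q = ∑_{i=1}^q σ_i u_i v_i^T (σ_1 ≥ ⋯ ≥ σ_q > 0). Then every matrix of the form W = ∑_{j∈J} σ_j u_j v_j^T (X X^T)^{-1/2}, where J ⊆ {1,...,q} with |J| = k, is a critical point of L^1(W) = (1/2)‖Y - W X‖_F^2 restricted to the manifold M_k of rank-k matrices, meaning the directional derivative of L^1 at W vanishes in every tangent direction Z ∈ T_W M_k = {W A + B W}. -/

import Mathlib

/-! At such a `W` the residual correlation `G = (Y - W X) Xᵀ` equals `Q_{Jᶜ} (X Xᵀ)^{1/2}`, where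
`Q_{Jᶜ}` collects the singular triples not in `J`. Orthogonality of the singular vectors gives
`Wᵀ G = 0` and `G Wᵀ = 0`, so `⟪G, W A + B W⟫_F = 0`; and since `L¹` is quadratic along lines,
its derivative at `W` in direction `Z` is `-⟪G, Z⟫_F`. -/

open Matrix

/-- The principal real power of a positive semidefinite (here: Hermitian) real matrix,
defined through its spectral decomposition: A^r = U diag(λᵢ^r) Uᵀ. -/
noncomputable def psdRpow {n : ℕ} {A : Matrix (Fin n) (Fin n) ℝ} (hA : A.IsHermitian) (r : ℝ) :
    Matrix (Fin n) (Fin n) ℝ :=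
  (hA.eigenvectorUnitary : Matrix (Fin n) (Fin n) ℝ) *
    Matrix.diagonal (fun i => (hA.eigenvalues i) ^ r) *
    (star (hA.eigenvectorUnitary : Matrix (Fin n) (Fin n) ℝ))

/-- The loss L¹(W) = (1/2)‖Y - W X‖_F² written via the trace. -/
noncomputable def L1 {dx dy m : ℕ} (X : Matrix (Fin dx) (Fin m) ℝ)
    (Y : Matrix (Fin dy) (Fin m) ℝ) (W : Matrix (Fin dy) (Fin dx) ℝ) : ℝ :=
  (1 / 2) * Matrix.trace ((Y - W * X) * (Y - W * X)ᵀ)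

section psdRpow

variable {n : ℕ} {A : Matrix (Fin n) (Fin n) ℝ} (hA : A.IsHermitian)

lemma psdRpow_eq_conjStarAlgAut (r : ℝ) :
    psdRpow hA r = Unitary.conjStarAlgAut ℝ _ hA.eigenvectorUnitary
      (diagonal fun i => hA.eigenvalues i ^ r) :=
  rfl

lemma psdRpow_mul_psdRpow (hpos : ∀ i, 0 < hA.eigenvalues i) (r s : ℝ) :
    psdRpow hA r * psdRpow hA s = psdRpow hA (r + s) := by
  simp only [psdRpow_eq_conjStarAlgAut, ← map_mul, diagonal_mul_diagonal,
    Real.rpow_add (hpos _)]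

lemma psdRpow_zero : psdRpow hA 0 = 1 := by
  simp [psdRpow_eq_conjStarAlgAut]

lemma psdRpow_one : psdRpow hA 1 = A := by
  simpa [psdRpow_eq_conjStarAlgAut, Function.comp_def] using hA.spectral_theorem.symm

lemma transpose_psdRpow (r : ℝ) : (psdRpow hA r)ᵀ = psdRpow hA r := by
  have h : (psdRpow hA r).IsHermitian :=
    isHermitian_mul_mul_conjTranspose _ (isHermitian_diagonal _)
  simpa [IsHermitian, conjTranspose_eq_transpose_of_trivial] using h

end psdRpow

lemma sub_mul_psdRpow_mul_mul_transpose {dx dy m : ℕ} {X : Matrix (Fin dx) (Fin m) ℝ}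
    (hX : (X * Xᵀ).PosDef) (Y : Matrix (Fin dy) (Fin m) ℝ) (P : Matrix (Fin dy) (Fin dx) ℝ) :
    (Y - P * psdRpow hX.1 (-(1 / 2)) * X) * Xᵀ =
      (Y * Xᵀ * psdRpow hX.1 (-(1 / 2)) - P) * psdRpow hX.1 (1 / 2) := by
  have hpos := hX.eigenvalues_pos
  have hSR : psdRpow hX.1 (-(1 / 2)) * psdRpow hX.1 (1 / 2) = 1 := by
    rw [psdRpow_mul_psdRpow hX.1 hpos]; norm_num [psdRpow_zero]
  have hSA : psdRpow hX.1 (-(1 / 2)) * (X * Xᵀ) = psdRpow hX.1 (1 / 2) := by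
    have h := psdRpow_mul_psdRpow hX.1 hpos (-(1 / 2)) 1
    rwa [psdRpow_one, show -(1 / 2 : ℝ) + 1 = 1 / 2 by norm_num] at h
  rw [Matrix.sub_mul, Matrix.sub_mul, Matrix.mul_assoc, Matrix.mul_assoc, hSA,
    Matrix.mul_assoc (Y * Xᵀ), hSR, Matrix.mul_one]

lemma sum_smul_vecMulVec_mul_sum_smul_vecMulVec_of_disjoint {ι R l m n : Type*} [Fintype m]
    [CommSemiring R] {S T : Finset ι} (hST : Disjoint S T) (σ τ : ι → R) (a : ι → l → R)
    (b c : ι → m → R) (d : ι → n → R) (hbc : ∀ i j, i ≠ j → b i ⬝ᵥ c j = 0) :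
    (∑ i ∈ S, σ i • vecMulVec (a i) (b i)) * (∑ j ∈ T, τ j • vecMulVec (c j) (d j)) = 0 := by
  rw [Matrix.sum_mul]
  refine Finset.sum_eq_zero fun i hi => ?_
  rw [Matrix.mul_sum]
  refine Finset.sum_eq_zero fun j hj => ?_
  have hij : i ≠ j := fun h => Finset.disjoint_left.mp hST hi (h ▸ hj)
  rw [Matrix.smul_mul, Matrix.mul_smul, vecMulVec_mul_vecMulVec, hbc i j hij,
    zero_smul]
  ext
  simp [vecMulVec_apply]

lemma trace_mul_transpose_add_eq_zero {R m n : Type*} [Fintype m] [Fintype n] [CommRing R]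
    {G W : Matrix m n R} (hWG : Wᵀ * G = 0) (hGW : G * Wᵀ = 0) (A : Matrix n n R)
    (B : Matrix m m R) : trace (G * (W * A + B * W)ᵀ) = 0 := by
  have hA : trace (G * Aᵀ * Wᵀ) = 0 := by
    rw [trace_mul_comm, ← Matrix.mul_assoc, hWG, Matrix.zero_mul, trace_zero]
  have hB : trace (G * Wᵀ * Bᵀ) = 0 := by
    rw [hGW, Matrix.zero_mul, trace_zero]
  simp only [transpose_add, transpose_mul, Matrix.mul_add, trace_add, ← Matrix.mul_assoc, hA, hB,
    add_zero]

lemma L1_add_smul {dx dy m : ℕ} (X : Matrix (Fin dx) (Fin m) ℝ) (Y : Matrix (Fin dy) (Fin m) ℝ)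
    (W Z : Matrix (Fin dy) (Fin dx) ℝ) (t : ℝ) :
    L1 X Y (W + t • Z) = L1 X Y W - t * trace ((Y - W * X) * Xᵀ * Zᵀ) +
      t ^ 2 * ((1 / 2) * trace (Z * X * (Z * X)ᵀ)) := by
  have hres : Y - (W + t • Z) * X = (Y - W * X) - t • (Z * X) := by
    rw [Matrix.add_mul, Matrix.smul_mul]; abel
  rw [L1, L1, hres]
  generalize Y - W * X = E
  have hcross : trace (Z * X * Eᵀ) = trace (E * Xᵀ * Zᵀ) := by
    rw [← trace_transpose]; simp only [transpose_mul, transpose_transpose, Matrix.mul_assoc]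
  simp only [transpose_sub, transpose_smul, Matrix.sub_mul, Matrix.mul_sub, Matrix.smul_mul,
    Matrix.mul_smul, trace_sub, trace_smul, smul_eq_mul, hcross, transpose_mul,
    ← Matrix.mul_assoc]
  ring

lemma hasDerivAt_L1_add_smul {dx dy m : ℕ} (X : Matrix (Fin dx) (Fin m) ℝ)
    (Y : Matrix (Fin dy) (Fin m) ℝ) (W Z : Matrix (Fin dy) (Fin dx) ℝ) :
    HasDerivAt (fun t : ℝ => L1 X Y (W + t • Z)) (-trace ((Y - W * X) * Xᵀ * Zᵀ)) 0 := by
  rw [funext (L1_add_smul X Y W Z)]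
  simpa using (((hasDerivAt_id' (0 : ℝ)).mul_const (trace ((Y - W * X) * Xᵀ * Zᵀ))).const_sub
    (L1 X Y W)).fun_add ((hasDerivAt_pow 2 (0 : ℝ)).mul_const ((1 / 2) * trace (Z * X * (Z * X)ᵀ)))

theorem stmt12_general {dx dy m q : ℕ}
    (X : Matrix (Fin dx) (Fin m) ℝ) (Y : Matrix (Fin dy) (Fin m) ℝ)
    (hX : (X * Xᵀ).PosDef)
    (σ : Fin q → ℝ) (u : Fin q → Fin dy → ℝ) (v : Fin q → Fin dx → ℝ)
    (hu : ∀ i j, u i ⬝ᵥ u j = if i = j then (1 : ℝ) else 0)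
    (hv : ∀ i j, v i ⬝ᵥ v j = if i = j then (1 : ℝ) else 0)
    (hQ : Y * Xᵀ * psdRpow hX.1 (-(1 / 2)) =
      ∑ i : Fin q, σ i • Matrix.vecMulVec (u i) (v i))
    (J : Finset (Fin q))
    (W : Matrix (Fin dy) (Fin dx) ℝ)
    (hW : W = (∑ j ∈ J, σ j • Matrix.vecMulVec (u j) (v j)) * psdRpow hX.1 (-(1 / 2))) :
    ∀ (A : Matrix (Fin dx) (Fin dx) ℝ) (B : Matrix (Fin dy) (Fin dy) ℝ),
      HasDerivAt (fun t : ℝ => L1 X Y (W + t • (W * A + B * W))) 0 0 := by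
  intro A B
  set S := psdRpow hX.1 (-(1 / 2))
  set R := psdRpow hX.1 (1 / 2)
  set QJ := ∑ j ∈ J, σ j • vecMulVec (u j) (v j)
  set QJc := ∑ j ∈ Jᶜ, σ j • vecMulVec (u j) (v j)
  have hu' : ∀ i j, i ≠ j → u i ⬝ᵥ u j = 0 := fun i j hij => by rw [hu, if_neg hij]
  have hv' : ∀ i j, i ≠ j → v i ⬝ᵥ v j = 0 := fun i j hij => by rw [hv, if_neg hij]
  have hRS : R * S = 1 := by
    rw [psdRpow_mul_psdRpow hX.1 hX.eigenvalues_pos]; norm_num [psdRpow_zero]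
  have hG : (Y - W * X) * Xᵀ = QJc * R := by
    rw [hW, sub_mul_psdRpow_mul_mul_transpose hX, hQ, ← Finset.sum_compl_add_sum J,
      add_sub_cancel_right]
  have hWT : Wᵀ = S * ∑ j ∈ J, σ j • vecMulVec (v j) (u j) := by
    simp [hW, S, QJ, transpose_sum, transpose_psdRpow]
  have hWG : Wᵀ * ((Y - W * X) * Xᵀ) = 0 := by
    rw [hG, hWT, Matrix.mul_assoc, ← Matrix.mul_assoc _ QJc,
      sum_smul_vecMulVec_mul_sum_smul_vecMulVec_of_disjoint disjoint_compl_right _ _ _ _ _ _ hu',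
      Matrix.zero_mul, Matrix.mul_zero]
  have hGW : (Y - W * X) * Xᵀ * Wᵀ = 0 := by
    rw [hG, hWT, Matrix.mul_assoc, ← Matrix.mul_assoc R, hRS, Matrix.one_mul,
      sum_smul_vecMulVec_mul_sum_smul_vecMulVec_of_disjoint disjoint_compl_left _ _ _ _ _ _ hv']
  have h := hasDerivAt_L1_add_smul X Y W (W * A + B * W)
  rwa [trace_mul_transpose_add_eq_zero hWG hGW, neg_zero] at h

/-- Every W = ∑_{j∈J} σ_j u_j v_jᵀ (X Xᵀ)^{-1/2}, where Q = Y Xᵀ (X Xᵀ)^{-1/2} has reduced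
SVD ∑ σ_i u_i v_iᵀ and |J| = k, is a critical point of L¹ restricted to the manifold of
rank-k matrices: the directional derivative of L¹ vanishes in every tangent direction
Z = W A + B W. -/
theorem stmt12 {dx dy m q k : ℕ}
    (X : Matrix (Fin dx) (Fin m) ℝ) (Y : Matrix (Fin dy) (Fin m) ℝ)
    (hX : (X * Xᵀ).PosDef)
    (σ : Fin q → ℝ) (u : Fin q → Fin dy → ℝ) (v : Fin q → Fin dx → ℝ)
    (hσpos : ∀ i, 0 < σ i) (hσmono : Antitone σ)
    (hu : ∀ i j, u i ⬝ᵥ u j = if i = j then (1 : ℝ) else 0)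
    (hv : ∀ i j, v i ⬝ᵥ v j = if i = j then (1 : ℝ) else 0)
    (hQ : Y * Xᵀ * psdRpow hX.1 (-(1 / 2)) =
      ∑ i : Fin q, σ i • Matrix.vecMulVec (u i) (v i))
    (J : Finset (Fin q)) (hJ : J.card = k)
    (W : Matrix (Fin dy) (Fin dx) ℝ)
    (hW : W = (∑ j ∈ J, σ j • Matrix.vecMulVec (u j) (v j)) * psdRpow hX.1 (-(1 / 2))) :
    ∀ (A : Matrix (Fin dx) (Fin dx) ℝ) (B : Matrix (Fin dy) (Fin dy) ℝ),
      HasDerivAt (fun t : ℝ => L1 X Y (W + t • (W * A + B * W))) 0 0 :=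
  stmt12_general X Y hX σ u v hu hv hQ J W hW
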